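/- Let p be a point sphere complex, q₀, q₁ isotropic with ⟨q₀,p⟩ ≠ 0 and q₁ ∉ span{q₀,p}, and M := span{q₀,q₁,p}. For an admissible isotropic q ∈ M (meaning ⟨q,p⟩ ≠ 0 and ⟨q₀,q⟩ ≠ 0) set a_q := ⟨q,p⟩q₀ − ⟨q₀,p⟩q. Let m be a point sphere lying on the sphere q₀, i.e. m isotropic with ⟨m,p⟩ = 0 and ⟨m,q₀⟩ = 0. Then for every admissible q: (i) σ_{a_q}(m) is a point sphere: ⟨σ_{a_q}(m), p⟩ = 0; (ii) σ_{a_q}(m) lies on the sphere q: ⟨σ_{a_q}(m), q⟩ = 0; and (iii) all the vectors σ_{a_q}(m), for q ranging over the admissible spheres of the pencil, lie in the fixed subspace span({m} ∪ (M ∩ p^⊥)) of dimension at most 3, every element of which is orthogonal to p — i.e. the evolution of the point m traces a circle. -/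

import Mathlib

/-!
The Lie inversion `σ_a` in `a = a_q` is an isometry of `B`. It fixes `p`, since `a ⊥ p`, and it
sends `q₀` to a multiple of `q`, since `a` is a combination of the isotropic vectors `q₀` and `q`.
Hence a point sphere `m` on `q₀` goes to a point sphere on `q`. Moreover `σ_a(m) = m - c • a`
with `a ∈ M ∩ p^⊥`, a subspace of dimension at most 2 because `p ∈ M` is not isotropic.
-/

noncomputable section

/-- The symmetric bilinear form of signature (4,2) on ℝ⁶, modelling ℝ^{4,2}. -/
def B (x y : Fin 6 → ℝ) : ℝ :=
  x 0 * y 0 + x 1 * y 1 + x 2 * y 2 + x 3 * y 3 - x 4 * y 4 - x 5 * y 5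

/-- The Lie inversion with respect to the linear sphere complex `a`. -/
def lieInv (a x : Fin 6 → ℝ) : Fin 6 → ℝ :=
  x - (2 * B x a / B a a) • a

lemma B_add_left (x y z : Fin 6 → ℝ) : B (x + y) z = B x z + B y z := by
  simp [B]; ring

lemma B_smul_left (c : ℝ) (x z : Fin 6 → ℝ) : B (c • x) z = c * B x z := by
  simp [B]; ring

/-- The orthogonal complement of a single vector with respect to `B`. -/
def perpVec (u : Fin 6 → ℝ) : Submodule ℝ (Fin 6 → ℝ) where
  carrier := {x | B x u = 0}
  add_mem' := fun {a b} ha hb => by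
    simp only [Set.mem_setOf_eq] at *
    rw [B_add_left, ha, hb, add_zero]
  zero_mem' := by simp [B]
  smul_mem' := fun c x hx => by
    simp only [Set.mem_setOf_eq] at *
    rw [B_smul_left, hx, mul_zero]

lemma B_comm (x y : Fin 6 → ℝ) : B x y = B y x := by
  simp only [B]; ring

lemma B_smul_right (c : ℝ) (x z : Fin 6 → ℝ) : B x (c • z) = c * B x z := by
  rw [B_comm, B_smul_left, B_comm]

section LieInversion

variable (a : Fin 6 → ℝ)

lemma B_lieInv_left (x y : Fin 6 → ℝ) : B (lieInv a x) y = B x y - 2 * B x a / B a a * B a y := by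
  simp only [lieInv, B, Pi.sub_apply, Pi.smul_apply, smul_eq_mul]; ring

lemma B_lieInv_lieInv (ha : B a a ≠ 0) (x y : Fin 6 → ℝ) :
    B (lieInv a x) (lieInv a y) = B x y := by
  rw [B_lieInv_left, B_comm x (lieInv a y), B_comm a (lieInv a y), B_lieInv_left, B_lieInv_left,
    B_comm y x, B_comm a x]
  field_simp
  ring

lemma lieInv_eq_self_of_B_eq_zero {x : Fin 6 → ℝ} (hx : B x a = 0) : lieInv a x = x := by
  simp [lieInv, hx]

lemma lieInv_mem_span_singleton_sup {S : Submodule ℝ (Fin 6 → ℝ)} (ha : a ∈ S) (x : Fin 6 → ℝ) :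
    lieInv a x ∈ Submodule.span ℝ {x} ⊔ S :=
  sub_mem (Submodule.mem_sup_left (Submodule.mem_span_singleton_self x))
    (Submodule.mem_sup_right (S.smul_mem _ ha))

end LieInversion

/-- The linear sphere complex `a_q` attached to a sphere `q` of the pencil. -/
def evolutionComplex (p q₀ q : Fin 6 → ℝ) : Fin 6 → ℝ := B q p • q₀ - B q₀ p • q

section EvolutionComplex

variable {p q₀ q : Fin 6 → ℝ}

lemma B_evolutionComplex_left (y : Fin 6 → ℝ) :
    B (evolutionComplex p q₀ q) y = B q p * B q₀ y - B q₀ p * B q y := by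
  simp only [evolutionComplex, B, Pi.sub_apply, Pi.smul_apply, smul_eq_mul]; ring

lemma evolutionComplex_mem_perpVec : evolutionComplex p q₀ q ∈ perpVec p := by
  change B _ p = 0
  rw [B_evolutionComplex_left]; ring

lemma B_evolutionComplex_self (iq₀ : B q₀ q₀ = 0) (iq : B q q = 0) :
    B (evolutionComplex p q₀ q) (evolutionComplex p q₀ q) = -2 * B q p * B q₀ p * B q₀ q := by
  rw [B_evolutionComplex_left, B_comm q₀ (evolutionComplex p q₀ q),
    B_comm q (evolutionComplex p q₀ q), B_evolutionComplex_left,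
    B_evolutionComplex_left, iq₀, iq, B_comm q q₀]
  ring

lemma B_evolutionComplex_self_ne_zero (iq₀ : B q₀ q₀ = 0) (iq : B q q = 0) (hqp : B q p ≠ 0)
    (hq₀p : B q₀ p ≠ 0) (hq₀q : B q₀ q ≠ 0) :
    B (evolutionComplex p q₀ q) (evolutionComplex p q₀ q) ≠ 0 := by
  rw [B_evolutionComplex_self iq₀ iq]
  exact mul_ne_zero (mul_ne_zero (mul_ne_zero (by norm_num) hqp) hq₀p) hq₀q

lemma lieInv_evolutionComplex_apply_point_complex : lieInv (evolutionComplex p q₀ q) p = p :=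
  lieInv_eq_self_of_B_eq_zero _ (by rw [B_comm]; exact evolutionComplex_mem_perpVec)

lemma lieInv_evolutionComplex_apply_initial_sphere (iq₀ : B q₀ q₀ = 0) (iq : B q q = 0)
    (hqp : B q p ≠ 0) (hq₀p : B q₀ p ≠ 0) (hq₀q : B q₀ q ≠ 0) :
    lieInv (evolutionComplex p q₀ q) q₀ = (B q₀ p / B q p) • q := by
  have hcoeff : 2 * B q₀ (evolutionComplex p q₀ q) /
      B (evolutionComplex p q₀ q) (evolutionComplex p q₀ q) = (B q p)⁻¹ := by
    rw [B_evolutionComplex_self iq₀ iq, B_comm, B_evolutionComplex_left, iq₀, B_comm q q₀]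
    field_simp
    ring
  rw [lieInv, hcoeff, evolutionComplex, smul_sub, smul_smul, smul_smul, inv_mul_cancel₀ hqp,
    one_smul, sub_sub_cancel, div_eq_inv_mul]

end EvolutionComplex

lemma finrank_inf_perpVec_lt {M : Submodule ℝ (Fin 6 → ℝ)} {p : Fin 6 → ℝ} (hpM : p ∈ M)
    (hp : B p p ≠ 0) : Module.finrank ℝ ↥(M ⊓ perpVec p) < Module.finrank ℝ M :=
  Submodule.finrank_lt_finrank_of_lt <|
    lt_of_le_of_ne inf_le_left fun h => hp (h.ge hpM).2

theorem stmt_7_general (p q₀ q₁ : Fin 6 → ℝ) (hp : B p p = -1)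
    (iq₀ : B q₀ q₀ = 0)
    (hq₀p : B q₀ p ≠ 0)
    (m : Fin 6 → ℝ)
    (hmp : B m p = 0) (hmq₀ : B m q₀ = 0)
    (M : Submodule ℝ (Fin 6 → ℝ))
    (hM : M = Submodule.span ℝ ({q₀, q₁, p} : Set (Fin 6 → ℝ)))
    (W : Submodule ℝ (Fin 6 → ℝ))
    (hW : W = Submodule.span ℝ ({m} : Set (Fin 6 → ℝ)) ⊔ (M ⊓ perpVec p)) :
    Module.finrank ℝ W ≤ 3 ∧ (∀ x ∈ W, B x p = 0) ∧
    ∀ q ∈ M, B q q = 0 → B q p ≠ 0 → B q₀ q ≠ 0 →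
      B (lieInv (B q p • q₀ - B q₀ p • q) m) p = 0 ∧
      B (lieInv (B q p • q₀ - B q₀ p • q) m) q = 0 ∧
      lieInv (B q p • q₀ - B q₀ p • q) m ∈ W := by
  have hq₀M : q₀ ∈ M := hM ▸ Submodule.subset_span (by simp)
  have hpM : p ∈ M := hM ▸ Submodule.subset_span (by simp)
  have hM3 : Module.finrank ℝ M ≤ 3 :=
    hM ▸ (finrank_span_le_card _).trans (by simpa using Finset.card_le_three)
  have hm1 : Module.finrank ℝ (Submodule.span ℝ ({m} : Set (Fin 6 → ℝ))) ≤ 1 :=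
    (finrank_span_le_card _).trans (by simp)
  have hWperp : W ≤ perpVec p :=
    hW ▸ sup_le ((Submodule.span_singleton_le_iff_mem _ _).mpr hmp) inf_le_right
  refine ⟨?_, hWperp, fun q hqM iq hqp hq₀q => ?_⟩
  · subst hW
    have := finrank_inf_perpVec_lt hpM (by rw [hp]; norm_num)
    have := Submodule.finrank_add_le_finrank_add_finrank (Submodule.span ℝ {m}) (M ⊓ perpVec p)
    omega
  change lieInv (evolutionComplex p q₀ q) m ∈ perpVec p ∧ _ ∧ _
  have hσ := B_lieInv_lieInv _ (B_evolutionComplex_self_ne_zero iq₀ iq hqp hq₀p hq₀q) m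
  refine ⟨?_, ?_, ?_⟩
  · have := hσ p
    rwa [lieInv_evolutionComplex_apply_point_complex, hmp] at this
  · have := hσ q₀
    rw [lieInv_evolutionComplex_apply_initial_sphere iq₀ iq hqp hq₀p hq₀q, B_smul_right, hmq₀] at this
    exact (mul_eq_zero.mp this).resolve_left (div_ne_zero hq₀p hqp)
  · refine hW ▸ lieInv_mem_span_singleton_sup _
      (Submodule.mem_inf.mpr ⟨?_, evolutionComplex_mem_perpVec⟩) m
    exact sub_mem (M.smul_mem _ hq₀M) (M.smul_mem _ hqM)

/-- Evolving a point sphere `m` lying on `q₀` by the evolution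
map associated to the M-sphere pencil `M = span{q₀,q₁,p}`: for every admissible
`q`, `σ_{a_q}(m)` is a point sphere lying on `q`, and all images lie in the
fixed subspace `span({m} ∪ (M ∩ p^⊥))`, which has dimension at most 3 and is
orthogonal to `p` — i.e. the evolution of `m` traces a circle. -/
theorem stmt_7 (p q₀ q₁ : Fin 6 → ℝ) (hp : B p p = -1)
    (hq₀ : q₀ ≠ 0) (iq₀ : B q₀ q₀ = 0) (hq₁ : q₁ ≠ 0) (iq₁ : B q₁ q₁ = 0)
    (hq₀p : B q₀ p ≠ 0)
    (hq₁M : q₁ ∉ Submodule.span ℝ ({q₀, p} : Set (Fin 6 → ℝ)))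
    (m : Fin 6 → ℝ) (hm : m ≠ 0) (im : B m m = 0)
    (hmp : B m p = 0) (hmq₀ : B m q₀ = 0)
    (M : Submodule ℝ (Fin 6 → ℝ))
    (hM : M = Submodule.span ℝ ({q₀, q₁, p} : Set (Fin 6 → ℝ)))
    (W : Submodule ℝ (Fin 6 → ℝ))
    (hW : W = Submodule.span ℝ ({m} : Set (Fin 6 → ℝ)) ⊔ (M ⊓ perpVec p)) :
    Module.finrank ℝ W ≤ 3 ∧ (∀ x ∈ W, B x p = 0) ∧
    ∀ q ∈ M, B q q = 0 → B q p ≠ 0 → B q₀ q ≠ 0 →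
      B (lieInv (B q p • q₀ - B q₀ p • q) m) p = 0 ∧
      B (lieInv (B q p • q₀ - B q₀ p • q) m) q = 0 ∧
      lieInv (B q p • q₀ - B q₀ p • q) m ∈ W :=
  stmt_7_general p q₀ q₁ hp iq₀ hq₀p m hmp hmq₀ M hM W hW
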